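/- Let S be a reduced set of paths of length at least 2 in a finite quiver Q, and n ≥ 1. Every (n+m)-overlap w ∈ O_{n+m}(S) can be written as w = w'w'' where w' ∈ O_n(S) and (w'', v) ∈ QO_m(S) for some path v of positive length. -/

import Mathlib

universe u v

/-! Combinatorics of paths in a quiver: divisibility, overlaps, quasioverlaps. -/

/-- The type of all paths in a quiver `V`, bundled with their endpoints. -/
abbrev PathIn (V : Type u) [Quiver.{v + 1} V] : Type (max u (v + 1)) :=
  Σ a b : V, Quiver.Path a b

namespace PathIn

variable {V : Type u} [Quiver.{v + 1} V]

/-- Source of a bundled path. -/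
def src (p : PathIn V) : V := p.1

/-- Target of a bundled path. -/
def tgt (p : PathIn V) : V := p.2.1

/-- Length of a bundled path. -/
def len (p : PathIn V) : ℕ := p.2.2.length

/-- The path of length zero at a vertex. -/
def vert (a : V) : PathIn V := ⟨a, a, Quiver.Path.nil⟩

/-- Concatenation of bundled paths (junk value `p` if the endpoints do not match). -/
noncomputable def comp (p q : PathIn V) : PathIn V :=
  open Classical in
  if h : p.tgt = q.src then ⟨p.1, q.2.1, p.2.2.comp (q.2.2.cast h.symm rfl)⟩ else p

/-- `LDiv p q` : `p` divides `q` on the left, i.e. `q = p v` for some path `v`. -/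
def LDiv (p q : PathIn V) : Prop :=
  ∃ v : PathIn V, p.tgt = v.src ∧ q = p.comp v

/-- `RDiv p q` : `p` divides `q` on the right, i.e. `q = u p` for some path `u`. -/
def RDiv (p q : PathIn V) : Prop :=
  ∃ u : PathIn V, u.tgt = p.src ∧ q = u.comp p

/-- `Div p q` : `p` divides `q`, i.e. `q = u p v` for some paths `u, v`. -/
def Div (p q : PathIn V) : Prop :=
  ∃ u v : PathIn V, u.tgt = p.src ∧ p.tgt = v.src ∧ q = (u.comp p).comp v

/-- A set of paths is reduced if no element of it properly divides another element. -/
def Reduced (S : Set (PathIn V)) : Prop :=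
  ∀ q ∈ S, ∀ p ∈ S, p ≠ q → ¬ Div p q

/-- `p` is an `S`-path if some element of `S` divides it on the right. -/
def IsSPath (S : Set (PathIn V)) (p : PathIn V) : Prop :=
  ∃ s ∈ S, RDiv s p

/-- `q` `S`-vanishes `p` (written `q ∣_S p`): `p = q u` where no element of `S` divides `u`. -/
def SVan (S : Set (PathIn V)) (q p : PathIn V) : Prop :=
  ∃ u : PathIn V, q.tgt = u.src ∧ p = q.comp u ∧ ∀ s ∈ S, ¬ Div s u

/-- `q` almost `S`-vanishes `p` (written `q ∣_S^a p`): `p = q u`, `q` does not `S`-vanish `p`,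
and for every factorization `u = u₁ u₂` with `u₂` of positive length, `q` `S`-vanishes `q u₁`. -/
def ASVan (S : Set (PathIn V)) (q p : PathIn V) : Prop :=
  ∃ u : PathIn V, q.tgt = u.src ∧ p = q.comp u ∧ ¬ SVan S q p ∧
    ∀ u₁ u₂ : PathIn V, u₁.tgt = u₂.src → u = u₁.comp u₂ → 0 < u₂.len →
      SVan S q (q.comp u₁)

/-- The set of `n`-overlaps of a set of paths `S`. -/
def Overlaps (S : Set (PathIn V)) : ℕ → Set (PathIn V)
  | 0 => {p | p.len = 1}
  | 1 => S
  | (n + 2) => {w | ∃ w₁ ∈ Overlaps S (n + 1), ∃ w₂ ∈ Overlaps S n,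
      SVan S w₁ w ∧ ASVan S w₂ w}

/-- The set of `n`-quasioverlaps of a set of paths `S`: pairs `(w, v)` with `v` of
positive length. -/
def QOverlaps (S : Set (PathIn V)) : ℕ → Set (PathIn V × PathIn V)
  | 0 => {wv | wv.1.len = 0 ∧ 0 < wv.2.len ∧ wv.2.tgt = wv.1.src}
  | 1 => {wv | 0 < wv.1.len ∧ 0 < wv.2.len ∧ wv.2.tgt = wv.1.src ∧ wv.2.comp wv.1 ∈ S}
  | (n + 2) => {wv | ∃ w₁, (w₁, wv.2) ∈ QOverlaps S (n + 1) ∧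
      ∃ w₂, (w₂, wv.2) ∈ QOverlaps S n ∧ SVan S w₁ wv.1 ∧ ASVan S w₂ wv.1}

/-- `sup` of the lengths of the `n`-overlaps of `S`, in `EReal` (`-∞` if there are none). -/
noncomputable def maxo (S : Set (PathIn V)) (n : ℕ) : EReal :=
  sSup ((fun w => (w.len : EReal)) '' Overlaps S n)

/-- `inf` of the lengths of the `n`-overlaps of `S`, in `EReal` (`+∞` if there are none). -/
noncomputable def mino (S : Set (PathIn V)) (n : ℕ) : EReal :=
  sInf ((fun w => (w.len : EReal)) '' Overlaps S n)

/-- `sup` of the lengths of the first components of `n`-quasioverlaps of `S`. -/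
noncomputable def maxqo (S : Set (PathIn V)) (n : ℕ) : EReal :=
  sSup ((fun w => (w.len : EReal)) '' {w | ∃ v, (w, v) ∈ QOverlaps S n})

/-- `inf` of the lengths of the first components of `n`-quasioverlaps of `S`. -/
noncomputable def minqo (S : Set (PathIn V)) (n : ℕ) : EReal :=
  sInf ((fun w => (w.len : EReal)) '' {w | ∃ v, (w, v) ∈ QOverlaps S n})

end PathIn

/-! The `n`-overlaps are prefix-free: two of them with `p ∣ q` on the left coincide, because
`q₂ ∣_S^a q` forbids an element of `S` inside any proper prefix of `q` beyond `q₂`. Hence the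
overlaps left-dividing a path form a chain with at most one member of each index.
An `(n+1)`-overlap splits as `a u` with `a ∈ O_n`, where the element `v u ∈ S` ending it starts
strictly inside `a`. Cutting each member of the chain below an `(n+m)`-overlap `w` after its
`n`-prefix `a` then yields, by induction on `m`, quasioverlaps whose second component is the
same `v`; the last one is the factor `w''` in `w = a w''`. -/

namespace Quiver.Path

variable {V : Type u} [Quiver.{v + 1} V]

/-- Levi's lemma for paths. -/
theorem exists_eq_comp_of_comp_eq_comp {a b c d : V} (p : Path a b) (p' : Path a d) :
    ∀ (q : Path b c) (q' : Path d c), p.comp q = p'.comp q' → q.length ≤ q'.length →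
      ∃ t : Path d b, p = p'.comp t ∧ q' = t.comp q
  | nil, q', h, _ => ⟨q', by simpa using h, rfl⟩
  | cons _ _, nil, _, hl => by simp at hl
  | cons q f, cons q' g, h, hl => by
    rw [comp_cons, comp_cons] at h
    obtain rfl := obj_eq_of_cons_eq_cons h
    obtain rfl : f = g := eq_of_heq (hom_heq_of_cons_eq_cons h)
    obtain ⟨t, rfl, rfl⟩ := exists_eq_comp_of_comp_eq_comp p p' q q'
      (eq_of_heq (heq_of_cons_eq_cons h)) (by simpa using hl)
    exact ⟨t, rfl, rfl⟩

end Quiver.Path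

namespace PathIn

variable {V : Type u} [Quiver.{v + 1} V]

lemma comp_mk {a b c : V} (p : Quiver.Path a b) (q : Quiver.Path b c) :
    comp ⟨a, b, p⟩ ⟨b, c, q⟩ = ⟨a, c, p.comp q⟩ :=
  dif_pos rfl

lemma mk_eq_mk_iff {a b b' : V} {P : Quiver.Path a b} {P' : Quiver.Path a b'} :
    (⟨a, b, P⟩ : PathIn V) = ⟨a, b', P'⟩ ↔ b = b' ∧ HEq P P' := by
  simp

lemma eq_vert_of_len_eq_zero {p : PathIn V} (h : p.len = 0) : p = vert p.src := by
  obtain ⟨a, b, P⟩ := p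
  obtain rfl := Quiver.Path.eq_of_length_zero P h
  obtain rfl := Quiver.Path.eq_nil_of_length_zero P h
  rfl

lemma exists_eq_comp_of_le_len (p : PathIn V) {k : ℕ} (hk : k ≤ p.len) :
    ∃ q r : PathIn V, q.tgt = r.src ∧ p = q.comp r ∧ q.len = k := by
  obtain ⟨a, c, P⟩ := p
  obtain ⟨b, q, r, rfl, hq⟩ := P.exists_eq_comp_of_le_length hk
  exact ⟨⟨a, b, q⟩, ⟨b, c, r⟩, rfl, (comp_mk q r).symm, hq⟩

section comp

variable {p q r : PathIn V}

lemma src_comp (h : p.tgt = q.src) : (p.comp q).src = p.src := by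
  obtain ⟨a, b, P⟩ := p; obtain ⟨b', c, Q⟩ := q
  obtain rfl : b = b' := h
  rw [comp_mk]; rfl

lemma tgt_comp (h : p.tgt = q.src) : (p.comp q).tgt = q.tgt := by
  obtain ⟨a, b, P⟩ := p; obtain ⟨b', c, Q⟩ := q
  obtain rfl : b = b' := h
  rw [comp_mk]; rfl

lemma len_comp (h : p.tgt = q.src) : (p.comp q).len = p.len + q.len := by
  obtain ⟨a, b, P⟩ := p; obtain ⟨b', c, Q⟩ := q
  obtain rfl : b = b' := h
  rw [comp_mk]; exact Quiver.Path.length_comp P Q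

@[simp] lemma comp_vert (p : PathIn V) : p.comp (vert p.tgt) = p :=
  comp_mk p.2.2 .nil

@[simp] lemma vert_comp (p : PathIn V) : (vert p.src).comp p = p := by
  obtain ⟨a, b, P⟩ := p
  exact (comp_mk .nil P).trans (by rw [Quiver.Path.nil_comp])

lemma comp_assoc (h₁ : p.tgt = q.src) (h₂ : q.tgt = r.src) :
    (p.comp q).comp r = p.comp (q.comp r) := by
  obtain ⟨a, b, P⟩ := p; obtain ⟨b', c, Q⟩ := q; obtain ⟨c', d, R⟩ := r
  obtain rfl : b = b' := h₁; obtain rfl : c = c' := h₂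
  simp only [comp_mk, Quiver.Path.comp_assoc]

lemma comp_left_cancel (h : p.tgt = q.src) (h' : p.tgt = r.src)
    (heq : p.comp q = p.comp r) : q = r := by
  obtain ⟨a, b, P⟩ := p; obtain ⟨b', c, Q⟩ := q; obtain ⟨b'', c', R⟩ := r
  obtain rfl : b = b' := h; obtain rfl : b = b'' := h'
  rw [comp_mk, comp_mk] at heq
  obtain ⟨rfl, hPQR⟩ := mk_eq_mk_iff.mp heq
  rw [Quiver.Path.comp_inj_right.mp (eq_of_heq hPQR)]

end comp

section div

variable {p q w : PathIn V}

lemma ldiv_refl (p : PathIn V) : LDiv p p := ⟨vert p.tgt, rfl, (comp_vert p).symm⟩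

lemma rdiv_refl (p : PathIn V) : RDiv p p := ⟨vert p.src, rfl, (vert_comp p).symm⟩

lemma LDiv.trans (h₁ : LDiv p q) (h₂ : LDiv q w) : LDiv p w := by
  obtain ⟨t, ht, rfl⟩ := h₁
  obtain ⟨s, hs, rfl⟩ := h₂
  have hts : t.tgt = s.src := (tgt_comp ht).symm.trans hs
  exact ⟨t.comp s, (src_comp hts).trans ht.symm |>.symm, comp_assoc ht hts⟩

lemma LDiv.eq_of_len_le (h : LDiv p q) (hl : q.len ≤ p.len) : p = q := by
  obtain ⟨t, ht, rfl⟩ := h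
  rw [len_comp ht] at hl
  rw [eq_vert_of_len_eq_zero (p := t) (by omega), ← ht, comp_vert]

lemma RDiv.div (h : RDiv p q) : Div p q := by
  obtain ⟨t, ht, rfl⟩ := h
  exact ⟨t, vert p.tgt, ht, rfl, by rw [← tgt_comp ht, comp_vert]⟩

lemma LDiv.div (h : LDiv p q) : Div p q := by
  obtain ⟨t, ht, rfl⟩ := h
  exact ⟨vert p.src, t, rfl, ht, by rw [vert_comp]⟩

lemma Div.len_le (h : Div p q) : p.len ≤ q.len := by
  obtain ⟨x, y, hx, hy, rfl⟩ := h
  rw [len_comp ((tgt_comp hx).trans hy), len_comp hx]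
  omega

lemma Div.trans_rdiv (h₁ : Div p q) (h₂ : RDiv q w) : Div p w := by
  obtain ⟨x, y, hx, hy, rfl⟩ := h₁
  obtain ⟨z, hz, rfl⟩ := h₂
  have hxp : (x.comp p).tgt = y.src := (tgt_comp hx).trans hy
  have hzx : z.tgt = x.src := hz.trans ((src_comp hxp).trans (src_comp hx))
  refine ⟨z.comp x, y, (tgt_comp hzx).trans hx, hy, ?_⟩
  rw [comp_assoc hzx hx, ← comp_assoc (hzx.trans (src_comp hx).symm) hxp]

lemma LDiv.ldiv_of_len_le (h₁ : LDiv p w) (h₂ : LDiv q w) (hl : p.len ≤ q.len) :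
    LDiv p q := by
  obtain ⟨t, ht, rfl⟩ := h₁
  obtain ⟨s, hs, heq⟩ := h₂
  have hlen : s.len ≤ t.len := by
    have := len_comp hs
    rw [← heq, len_comp ht] at this
    omega
  obtain ⟨a, b, P⟩ := p; obtain ⟨b', c, T⟩ := t; obtain ⟨a', d, Q⟩ := q
  obtain ⟨d', c', R⟩ := s
  obtain rfl : b = b' := ht; obtain rfl : d = d' := hs
  rw [comp_mk, comp_mk] at heq
  obtain rfl : a = a' := congrArg Sigma.fst heq
  obtain ⟨rfl, hPQ⟩ := mk_eq_mk_iff.mp heq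
  obtain ⟨t', rfl, -⟩ := Quiver.Path.exists_eq_comp_of_comp_eq_comp Q P R T
    (eq_of_heq hPQ).symm hlen
  exact ⟨⟨b, d, t'⟩, rfl, (comp_mk P t').symm⟩

lemma RDiv.rdiv_of_len_le (h₁ : RDiv p w) (h₂ : RDiv q w) (hl : p.len ≤ q.len) :
    RDiv p q := by
  obtain ⟨t, ht, rfl⟩ := h₁
  obtain ⟨s, hs, heq⟩ := h₂
  obtain ⟨a, b, T⟩ := t; obtain ⟨b', c, P⟩ := p; obtain ⟨d, c', Q⟩ := q
  obtain ⟨a', d', R⟩ := s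
  obtain rfl : b = b' := ht; obtain rfl : d' = d := hs
  rw [comp_mk, comp_mk] at heq
  obtain rfl : a = a' := congrArg Sigma.fst heq
  obtain ⟨rfl, hPQ⟩ := mk_eq_mk_iff.mp heq
  obtain ⟨t', -, rfl⟩ := Quiver.Path.exists_eq_comp_of_comp_eq_comp T R P Q
    (eq_of_heq hPQ) hl
  exact ⟨⟨_, _, t'⟩, rfl, (comp_mk t' P).symm⟩

lemma Reduced.eq_of_rdiv {S : Set (PathIn V)} (hred : Reduced S) {s s' : PathIn V}
    (hs : s ∈ S) (hs' : s' ∈ S) (h : RDiv s w) (h' : RDiv s' w) : s = s' := by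
  by_contra hne
  rcases le_total s.len s'.len with hl | hl
  · exact hred s' hs' s hs hne (h.rdiv_of_len_le h' hl).div
  · exact hred s hs s' hs' (Ne.symm hne) (h'.rdiv_of_len_le h hl).div

end div

section vanish

variable {S : Set (PathIn V)} {a p q u w : PathIn V}

lemma SVan.ldiv (h : SVan S q w) : LDiv q w := by
  obtain ⟨t, ht, rfl, -⟩ := h
  exact ⟨t, ht, rfl⟩

lemma ASVan.ldiv (h : ASVan S q w) : LDiv q w := by
  obtain ⟨t, ht, rfl, -⟩ := h
  exact ⟨t, ht, rfl⟩

lemma svan_comp_iff (h : p.tgt = u.src) : SVan S p (p.comp u) ↔ ∀ s ∈ S, ¬ Div s u := by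
  refine ⟨?_, fun hu => ⟨u, h, rfl, hu⟩⟩
  rintro ⟨t, ht, heq, ht'⟩
  rwa [comp_left_cancel ht h heq.symm] at ht'

lemma ASVan.of_comp_left (ha : a.tgt = p.src) (ha' : a.tgt = q.src)
    (h : ASVan S (a.comp p) (a.comp q)) : ASVan S p q := by
  obtain ⟨t, ht, heq, hns, hmin⟩ := h
  rw [tgt_comp ha] at ht
  rw [comp_assoc ha ht] at heq
  obtain rfl := comp_left_cancel ha' ((src_comp ht).trans ha.symm).symm heq
  have hat : (a.comp p).tgt = t.src := (tgt_comp ha).trans ht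
  refine ⟨t, ht, rfl, fun hsv => hns ?_, fun u₁ u₂ h₁₂ hu hl => ?_⟩
  · rw [← comp_assoc ha ht]
    exact (svan_comp_iff hat).mpr ((svan_comp_iff ht).mp hsv)
  · have hpu₁ : p.tgt = u₁.src := ht.trans (hu ▸ src_comp h₁₂)
    exact (svan_comp_iff hpu₁).mpr
      ((svan_comp_iff ((tgt_comp ha).trans hpu₁)).mp (hmin u₁ u₂ h₁₂ hu hl))

/-- By minimality, the element of `S` that keeps `q` from `S`-vanishing `w` cannot end before
`w` does. -/
lemma ASVan.exists_rdiv (h : ASVan S q w) : ∃ s ∈ S, RDiv s w ∧ s.len + q.len ≤ w.len := by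
  obtain ⟨t, ht, rfl, hns, hmin⟩ := h
  obtain ⟨s, hs, x, y, hx, hy, rfl⟩ : ∃ s ∈ S, Div s t := by
    by_contra! hfree
    exact hns ((svan_comp_iff ht).mpr hfree)
  have hxs : (x.comp s).tgt = y.src := (tgt_comp hx).trans hy
  have hqxs : q.tgt = (x.comp s).src := ht.trans (src_comp hxs)
  obtain hy0 | hy0 := Nat.eq_zero_or_pos y.len
  · obtain rfl : y = vert (x.comp s).tgt := (eq_vert_of_len_eq_zero hy0).trans (by rw [hxs])
    rw [comp_vert]
    have hqx : q.tgt = x.src := hqxs.trans (src_comp hx)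
    refine ⟨s, hs, ⟨q.comp x, (tgt_comp hqx).trans hx, (comp_assoc hqx hx).symm⟩, ?_⟩
    rw [len_comp hqxs, len_comp hx]
    omega
  · exact ((svan_comp_iff hqxs).mp (hmin (x.comp s) y hxs rfl hy0) s hs
      (RDiv.div ⟨x, hx, rfl⟩)).elim

lemma ASVan.svan_of_ldiv (h : ASVan S q w)
    (hqp : LDiv q p) (hpw : LDiv p w) (hl : p.len < w.len) : SVan S q p := by
  obtain ⟨t, ht, rfl, -, hmin⟩ := h
  obtain ⟨t₁, ht₁, rfl⟩ := hqp
  obtain ⟨r, hr, heq⟩ := hpw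
  have ht₁r : t₁.tgt = r.src := (tgt_comp ht₁).symm.trans hr
  have hqt₁r : q.tgt = (t₁.comp r).src := ht₁.trans (src_comp ht₁r).symm
  rw [comp_assoc ht₁ ht₁r] at heq
  have hr0 : 0 < r.len := by
    rw [heq, len_comp ht₁, len_comp hqt₁r, len_comp ht₁r] at hl
    omega
  exact hmin t₁ r ht₁r (comp_left_cancel ht hqt₁r heq) hr0

end vanish

section overlaps

variable {S : Set (PathIn V)}

lemma len_pos_of_mem_overlaps (hS : ∀ p ∈ S, 2 ≤ p.len) :
    ∀ {n : ℕ} {w : PathIn V}, w ∈ Overlaps S n → 0 < w.len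
  | 0, w, hw => by
    change w.len = 1 at hw
    omega
  | 1, w, hw => by
    have := hS w hw
    omega
  | _ + 2, w, hw => by
    obtain ⟨w₁, hw₁, -, -, hsv, -⟩ := hw
    obtain ⟨t, ht, rfl⟩ := hsv.ldiv
    have := len_pos_of_mem_overlaps hS hw₁
    rw [len_comp ht]
    omega

theorem eq_of_mem_overlaps_of_ldiv (hred : Reduced S) {n : ℕ} {p q w : PathIn V}
    (hp : p ∈ Overlaps S n) (hq : q ∈ Overlaps S n) (hpw : LDiv p w) (hqw : LDiv q w) :
    p = q := by
  wlog hl : p.len ≤ q.len generalizing p q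
  · exact (this hq hp hqw hpw (by omega)).symm
  have hpq := hpw.ldiv_of_len_le hqw hl
  match n, hp, hq with
  | 0, hp, hq =>
    change p.len = 1 at hp
    change q.len = 1 at hq
    exact hpq.eq_of_len_le (by omega)
  | 1, hp, hq =>
    by_contra hne
    exact hred q hq p hp hne hpq.div
  | _ + 2, hp, hq =>
    obtain hle | hlt := le_or_gt q.len p.len
    · exact hpq.eq_of_len_le hle
    obtain ⟨-, -, p₂, hp₂, -, hpa⟩ := hp
    obtain ⟨-, -, q₂, hq₂, -, hqa⟩ := hq
    obtain rfl : p₂ = q₂ :=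
      eq_of_mem_overlaps_of_ldiv hred hp₂ hq₂ (hpa.ldiv.trans hpq) hqa.ldiv
    -- `q₂ ∣_S^a q` makes `q₂` vanish the proper prefix `p`, which `q₂ ∣_S^a p` forbids.
    have hsv := hqa.svan_of_ldiv hpa.ldiv hpq hlt
    obtain ⟨-, -, -, hns, -⟩ := hpa
    exact (hns hsv).elim

lemma exists_mem_overlaps_ldiv {n : ℕ} :
    ∀ (k : ℕ) {c : PathIn V}, c ∈ Overlaps S (n + k + 1) →
      ∃ b ∈ Overlaps S (n + 1), LDiv b c
  | 0, c, hc => ⟨c, hc, ldiv_refl c⟩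
  | k + 1, c, hc => by
    obtain ⟨c₁, hc₁, -, -, hsv, -⟩ := hc
    obtain ⟨b, hb, hbc₁⟩ := exists_mem_overlaps_ldiv k hc₁
    exact ⟨b, hb, hbc₁.trans hsv.ldiv⟩

lemma ldiv_of_mem_overlaps (hred : Reduced S) {n k : ℕ} {b c w : PathIn V}
    (hb : b ∈ Overlaps S (n + 1)) (hc : c ∈ Overlaps S (n + k + 1))
    (hbw : LDiv b w) (hcw : LDiv c w) : LDiv b c := by
  obtain ⟨b', hb', hb'c⟩ := exists_mem_overlaps_ldiv k hc
  rwa [eq_of_mem_overlaps_of_ldiv hred hb hb' hbw (hb'c.trans hcw)]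

/-- `OverlapSplit S n a u v`: the path `a u` ends with the element `v u` of `S`, which starts
strictly inside the `n`-overlap `a`. -/
structure OverlapSplit (S : Set (PathIn V)) (n : ℕ) (a u v : PathIn V) : Prop where
  mem_overlaps : a ∈ Overlaps S n
  tgt_eq : a.tgt = u.src
  tgt_eq_of_overlap : v.tgt = u.src
  len_pos : 0 < u.len
  len_pos_of_overlap : 0 < v.len
  comp_mem : v.comp u ∈ S
  rdiv : RDiv (v.comp u) (a.comp u)

lemma OverlapSplit.not_asvan (hred : Reduced S) {n : ℕ} {a u v q : PathIn V}
    (h : OverlapSplit S n a u v) (hq : q ∈ Overlaps S n) : ¬ ASVan S q (a.comp u) := by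
  obtain ⟨ha, hau, hvu, -, hv, hvuS, hvuw⟩ := h
  intro hqa
  obtain ⟨s, hs, hsw, hlen⟩ := hqa.exists_rdiv
  obtain rfl := hred.eq_of_rdiv hs hvuS hsw hvuw
  obtain rfl := eq_of_mem_overlaps_of_ldiv hred hq ha hqa.ldiv ⟨u, hau, rfl⟩
  rw [len_comp hvu, len_comp hau] at hlen
  omega

/-- Writing `w = a u` with `a ∣_S w`, the element of `S` ending `w` is longer than the `S`-free
`u`. -/
theorem exists_overlapSplit (hS : ∀ p ∈ S, 2 ≤ p.len) (hred : Reduced S) :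
    ∀ {n : ℕ} {w : PathIn V}, w ∈ Overlaps S (n + 1) →
      ∃ a u v : PathIn V, w = a.comp u ∧ OverlapSplit S n a u v
  | 0, w, hw => by
    have hw2 := hS w hw
    obtain ⟨a, u, hau, rfl, ha⟩ := exists_eq_comp_of_le_len w (k := 1) (by omega)
    rw [len_comp hau] at hw2
    exact ⟨a, u, a, rfl, ha, hau, hau, by omega, by omega, hw, rdiv_refl _⟩
  | n + 1, w, hw => by
    obtain ⟨w₁, hw₁, w₂, hw₂, ⟨u, hu, rfl, hfree⟩, hasv⟩ := hw
    obtain ⟨a₁, u₁, v₁, rfl, hsplit₁⟩ := exists_overlapSplit hS hred hw₁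
    have hu0 : 0 < u.len := by
      by_contra! h0
      rw [eq_vert_of_len_eq_zero (Nat.le_zero.mp h0), ← hu, comp_vert] at hasv
      exact hsplit₁.not_asvan hred hw₂ hasv
    obtain ⟨s, hs, hsw, -⟩ := hasv.exists_rdiv
    have huw : RDiv u ((a₁.comp u₁).comp u) := ⟨_, hu, rfl⟩
    have hus : u.len < s.len := by
      by_contra! hle
      exact hfree s hs (hsw.rdiv_of_len_le huw hle).div
    obtain ⟨v, hvu, rfl⟩ := huw.rdiv_of_len_le hsw hus.le
    have hv0 : 0 < v.len := by
      rw [len_comp hvu] at hus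
      omega
    exact ⟨a₁.comp u₁, u, v, rfl, hw₁, hu, hvu, hu0, hv0, hs, hsw⟩

theorem OverlapSplit.exists_mem_qOverlaps (hred : Reduced S) {n : ℕ}
    {a u v : PathIn V} (h : OverlapSplit S n a u v) (hb : a.comp u ∈ Overlaps S (n + 1)) :
    ∀ (m : ℕ) {w : PathIn V}, w ∈ Overlaps S (n + m + 1) → LDiv (a.comp u) w →
      ∃ w'', a.tgt = w''.src ∧ w = a.comp w'' ∧ (w'', v) ∈ QOverlaps S (m + 1)
  | 0, w, hw, hbw => by
    obtain rfl := eq_of_mem_overlaps_of_ldiv hred hb hw hbw (ldiv_refl w)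
    exact ⟨u, h.tgt_eq, rfl, h.len_pos, h.len_pos_of_overlap, h.tgt_eq_of_overlap, h.comp_mem⟩
  | m + 1, w, hw, hbw => by
    have haw : LDiv a w := LDiv.trans ⟨u, h.tgt_eq, rfl⟩ hbw
    obtain ⟨w₁, hw₁, w₂, hw₂, ⟨r, hr, rfl, hfree⟩, hasv⟩ := hw
    obtain ⟨w₁', haw₁', rfl, hq₁⟩ := h.exists_mem_qOverlaps hred hb m hw₁
      (ldiv_of_mem_overlaps hred hb hw₁ hbw ⟨r, hr, rfl⟩)
    have hw₁'r : w₁'.tgt = r.src := (tgt_comp haw₁').symm.trans hr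
    have haw₁'r : a.tgt = (w₁'.comp r).src := haw₁'.trans (src_comp hw₁'r).symm
    obtain ⟨w₂', haw₂', rfl, hq₂⟩ :
        ∃ w₂', a.tgt = w₂'.src ∧ w₂ = a.comp w₂' ∧ (w₂', v) ∈ QOverlaps S m := by
      cases m with
      | zero =>
        obtain rfl := eq_of_mem_overlaps_of_ldiv hred hw₂ h.mem_overlaps hasv.ldiv haw
        exact ⟨vert w₂.tgt, rfl, (comp_vert w₂).symm, rfl, h.len_pos_of_overlap,
          h.tgt_eq_of_overlap.trans h.tgt_eq.symm⟩
      | succ j =>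
        exact h.exists_mem_qOverlaps hred hb j hw₂
          (ldiv_of_mem_overlaps hred hb hw₂ hbw hasv.ldiv)
    rw [comp_assoc haw₁' hw₁'r] at hasv ⊢
    exact ⟨w₁'.comp r, haw₁'r, rfl, w₁', hq₁, w₂', hq₂, ⟨r, hw₁'r, rfl, hfree⟩,
      hasv.of_comp_left haw₂' haw₁'r⟩

end overlaps

end PathIn

/-- every `(n+m)`-overlap `w` can be written as `w = w' w''` with `w'` an
`n`-overlap and `(w'', v)` an `m`-quasioverlap for some path `v` of positive length. -/
theorem overlap_factors_overlap_quasioverlap {V : Type u} [Quiver.{v + 1} V]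
    [Fintype V] [∀ a b : V, Fintype (a ⟶ b)]
    (S : Set (PathIn V)) (hS : ∀ p ∈ S, 2 ≤ p.len) (hred : PathIn.Reduced S)
    (n m : ℕ) (hn : 1 ≤ n) (w : PathIn V) (hw : w ∈ PathIn.Overlaps S (n + m)) :
    ∃ w' w'' vpath : PathIn V, w' ∈ PathIn.Overlaps S n ∧ 0 < vpath.len ∧
      (w'', vpath) ∈ PathIn.QOverlaps S m ∧
      w'.tgt = w''.src ∧ w = w'.comp w'' := by
  cases m with
  | zero =>
    have hw0 := PathIn.len_pos_of_mem_overlaps hS hw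
    exact ⟨w, PathIn.vert w.tgt, w, hw, hw0, ⟨rfl, hw0, rfl⟩, rfl,
      (PathIn.comp_vert w).symm⟩
  | succ m =>
    obtain ⟨b, hb, hbw⟩ := PathIn.exists_mem_overlaps_ldiv m hw
    obtain ⟨a, u, v, rfl, hsplit⟩ := PathIn.exists_overlapSplit hS hred hb
    obtain ⟨w'', haw, rfl, hq⟩ := hsplit.exists_mem_qOverlaps hred hb m hw hbw
    exact ⟨a, w'', v, hsplit.mem_overlaps, hsplit.len_pos_of_overlap, hq, haw, rfl⟩
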